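/- Let (V, +, ·) and (V, +, *) be two commutative associative radical F-algebra structures on V with associated abelian regular subgroups T₁, T₂ of Aff(V). If T₂ = φ⁻¹ T₁ φ for some φ ∈ GL(V), then φ is an F-algebra isomorphism from (V, +, ·) to (V, +, *). -/
import Mathlib

theorem stmt {F V : Type*} [Field F] [AddCommGroup V] [Module F V]
    (mul₁ mul₂ : V →ₗ[F] V →ₗ[F] V)
    (hc₁ : ∀ x y : V, mul₁ x y = mul₁ y x)
    (ha₁ : ∀ x y z : V, mul₁ (mul₁ x y) z = mul₁ x (mul₁ y z))
    (hrad₁ : ∀ x : V, ∃ y : V, x + y + mul₁ x y = 0)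
    (hc₂ : ∀ x y : V, mul₂ x y = mul₂ y x)
    (ha₂ : ∀ x y z : V, mul₂ (mul₂ x y) z = mul₂ x (mul₂ y z))
    (hrad₂ : ∀ x : V, ∃ y : V, x + y + mul₂ x y = 0)
    (T₁ T₂ : Subgroup (V ≃ᵃ[F] V))
    (hT₁ : ∀ g : V ≃ᵃ[F] V, g ∈ T₁ ↔ ∃ x : V, ∀ y : V, g y = y + x + mul₁ y x)
    (hT₂ : ∀ g : V ≃ᵃ[F] V, g ∈ T₂ ↔ ∃ x : V, ∀ y : V, g y = y + x + mul₂ y x)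
    (φ : V ≃ₗ[F] V)
    (φA : V ≃ᵃ[F] V) (hφA : ∀ x : V, φA x = φ x)
    (hconj : ∀ g : V ≃ᵃ[F] V, g ∈ T₂ ↔ ∃ h ∈ T₁, g = φA * h * φA⁻¹) :
    ∀ x y : V, φ (mul₁ x y) = mul₂ (φ x) (φ y) := by
  intro x y
  obtain ⟨x', hx'⟩ := hrad₁ x
  -- quasi-inverse relation in both orders
  have hx'' : x' + x + mul₁ x' x = 0 := by
    rw [hc₁]; rw [show x' + x + mul₁ x x' = x + x' + mul₁ x x' by abel]; exact hx'
  have comp1 : ∀ u v b : V, u + v + mul₁ u v = 0 →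
      (b + mul₁ b u) + mul₁ (b + mul₁ b u) v = b := by
    intro u v b h
    have e1 : mul₁ (b + mul₁ b u) v = mul₁ b v + mul₁ b (mul₁ u v) := by
      rw [map_add, LinearMap.add_apply, ha₁]
    have h2 : mul₁ b u + mul₁ b v + mul₁ b (mul₁ u v) = 0 := by
      have := congrArg (mul₁ b) h
      simpa [map_add] using this
    rw [e1, show b + mul₁ b u + (mul₁ b v + mul₁ b (mul₁ u v))
        = b + (mul₁ b u + mul₁ b v + mul₁ b (mul₁ u v)) by abel, h2, add_zero]
  set L : V →ₗ[F] V := LinearMap.id + mul₁.flip x with hL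
  set L' : V →ₗ[F] V := LinearMap.id + mul₁.flip x' with hL'
  have hLL' : L.comp L' = LinearMap.id := by
    ext b
    simpa [hL, hL'] using comp1 x' x b hx''
  have hL'L : L'.comp L = LinearMap.id := by
    ext b
    simpa [hL, hL'] using comp1 x x' b hx'
  set Le : V ≃ₗ[F] V := LinearEquiv.ofLinear L L' hLL' hL'L with hLe
  set g : V ≃ᵃ[F] V := Le.toAffineEquiv.trans (AffineEquiv.constVAdd F V x) with hg
  have hgapp : ∀ b : V, g b = b + x + mul₁ b x := by
    intro b
    simp [hg, hLe, hL, AffineEquiv.constVAdd_apply]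
    abel
  have hgT₁ : g ∈ T₁ := (hT₁ g).mpr ⟨x, hgapp⟩
  have hgT₂ : φA * g * φA⁻¹ ∈ T₂ := (hconj _).mpr ⟨g, hgT₁, rfl⟩
  obtain ⟨z, hz⟩ := (hT₂ _).mp hgT₂
  have hinv : ∀ w : V, φA⁻¹ w = φ.symm w := by
    intro w
    have h1 : φA (φ.symm w) = w := by rw [hφA]; simp
    calc φA⁻¹ w = φA⁻¹ (φA (φ.symm w)) := by rw [h1]
    _ = φ.symm w := by rw [show φA⁻¹ = φA.symm from rfl]; simp
  have happ : ∀ w : V, (φA * g * φA⁻¹) w = φ (g (φ.symm w)) := by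
    intro w
    simp [AffineEquiv.mul_def, hinv, hφA]
  have hz0 : z = φ x := by
    have := hz 0
    rw [happ 0] at this
    simp [hgapp] at this
    exact this.symm
  have hzy := hz (φ y)
  rw [happ, hz0] at hzy
  simp [hgapp] at hzy
  rw [hc₁ x y, hzy, hc₂]
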